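/- arXiv:2102.02016 — 5 statements merged into one kernel-verified Lean document; each statement's English description precedes it below -/
import Mathlib

section
/- Let $W$ (hypothesis) and $S$ (training set of $n$ i.i.d. samples from $\mu$) have joint distribution $P_{W,S}$, and suppose the generalization error gen$(w,s) = L_P(w,\mu) - L_E(w,s)$ is $\sigma/\sqrt{n}$-subgaussian under $P_S$ for each fixed $w$, with mean zero. Then for conjugate exponents $t, q > 1$ with $1/t + 1/q = 1$, and any positive integer $m$ with $mq > 2$ and $mq \in \mathbb{Z}^+$: $|\mathbb{E}_{P_{W,S}}[\text{gen}(W,S)^m]| \le \sigma^m (mq/n)^{m/2} e^{m/e} (I_P^{(t)}(W;S) + 1)^{1/t}$. -/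
open MeasureTheory Real

/-- `X` is `σ`-subgaussian under `P`: its MGF exists and is bounded by that of a
Gaussian with variance `σ²` (for a centered variable). -/
def IsSubgaussian {Ω : Type*} [MeasurableSpace Ω] (X : Ω → ℝ) (σ : ℝ)
    (P : Measure Ω) : Prop :=
  ∀ l : ℝ, Integrable (fun ω => Real.exp (l * X ω)) P ∧
    ∫ ω, Real.exp (l * X ω) ∂P ≤ Real.exp (l ^ 2 * σ ^ 2 / 2)

/-!
Change measure from `P_{W,S}` to `P_W ⊗ P_S`, whose density is `ρ = dP_{W,S}/d(P_W ⊗ P_S)`, and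
apply Hölder with exponents `t, q`: the `ρ`-factor is `(I_P^{(t)}(W;S) + 1)^{1/t}` and the other
factor is the `p`-th absolute moment of `gen`, `p = mq`, under the product measure. For fixed
`w`, with `s = σ/√n` and `λ = √p/s`, the pointwise bound `|x|^p ≤ (p/(eλ))^p (e^{λx} + e^{-λx})`
and the MGF bound give `E|gen w|^p ≤ 2 (ps²/e)^{p/2}`; averaging over `w` keeps the bound, and
since `p ≥ 2` the factor `2 ≤ e^{p/2 + p/e}` is absorbed by `e^{m/e}`.
-/

theorem rpow_le_div_exp_one_rpow_mul_exp {u p : ℝ} (hu : 0 ≤ u) (hp : 0 < p) :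
    u ^ p ≤ (p / exp 1) ^ p * exp u := by
  rcases hu.eq_or_lt with rfl | hu
  · rw [zero_rpow hp.ne']
    positivity
  have hlog : log (u / p) ≤ u / p - 1 := log_le_sub_one_of_pos (div_pos hu hp)
  rw [log_div hu.ne' hp.ne'] at hlog
  calc u ^ p = exp (log u * p) := rpow_def_of_pos hu p
    _ ≤ exp ((log p - 1) * p + u) := by
        gcongr
        have hscaled := mul_le_mul_of_nonneg_left hlog hp.le
        have hcancel : p * (u / p - 1) = u - p := by field_simp
        linarith
    _ = (p / exp 1) ^ p * exp u := by
        rw [exp_add, rpow_def_of_pos (by positivity), log_div hp.ne' (exp_pos 1).ne', log_exp]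

theorem abs_rpow_le_mul_exp_add_exp {l p : ℝ} (hl : 0 < l) (hp : 0 < p) (x : ℝ) :
    |x| ^ p ≤ (p / (exp 1 * l)) ^ p * (exp (l * x) + exp (-(l * x))) := by
  have hexp : exp (l * |x|) ≤ exp (l * x) + exp (-(l * x)) := by
    rcases le_total 0 x with hx | hx
    · rw [abs_of_nonneg hx]
      exact le_add_of_nonneg_right (exp_pos _).le
    · rw [abs_of_nonpos hx, mul_neg]
      exact le_add_of_nonneg_left (exp_pos _).le
  have hlp : 0 < l ^ p := rpow_pos_of_pos hl p
  rw [← div_div, div_rpow (by positivity) hl.le, div_mul_eq_mul_div, le_div_iff₀ hlp, mul_comm,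
    ← mul_rpow hl.le (abs_nonneg x)]
  calc (l * |x|) ^ p ≤ (p / exp 1) ^ p * exp (l * |x|) :=
        rpow_le_div_exp_one_rpow_mul_exp (by positivity) hp
    _ ≤ (p / exp 1) ^ p * (exp (l * x) + exp (-(l * x))) := by gcongr

namespace IsSubgaussian

variable {Ω : Type*} [MeasurableSpace Ω] {X : Ω → ℝ} {s : ℝ} {P : Measure Ω}

theorem aestronglyMeasurable (hX : IsSubgaussian X s P) : AEStronglyMeasurable X P := by
  have h := (hX 1).1.aemeasurable.log
  simp only [one_mul, log_exp] at h
  exact h.aestronglyMeasurable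

theorem integrable_exp_add_exp (hX : IsSubgaussian X s P) (l : ℝ) :
    Integrable (fun ω => exp (l * X ω) + exp (-(l * X ω))) P := by
  refine (hX l).1.add ?_
  simpa only [neg_mul] using (hX (-l)).1

theorem integral_exp_add_exp_le (hX : IsSubgaussian X s P) (l : ℝ) :
    ∫ ω, (exp (l * X ω) + exp (-(l * X ω))) ∂P ≤ 2 * exp (l ^ 2 * s ^ 2 / 2) := by
  have hneg := hX (-l)
  simp only [neg_mul, neg_sq] at hneg
  rw [integral_add (hX l).1 hneg.1]
  linarith [(hX l).2, hneg.2]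

theorem integrable_abs_rpow (hX : IsSubgaussian X s P) {p : ℝ} (hp : 0 < p) :
    Integrable (fun ω => |X ω| ^ p) P :=
  ((hX.integrable_exp_add_exp 1).const_mul _).mono'
    (hX.aestronglyMeasurable.aemeasurable.abs.pow_const p).aestronglyMeasurable
    (ae_of_all _ fun ω => by
      rw [norm_of_nonneg (by positivity)]
      exact abs_rpow_le_mul_exp_add_exp one_pos hp (X ω))

theorem integral_abs_rpow_le_of_pos (hX : IsSubgaussian X s P) {l p : ℝ} (hl : 0 < l)
    (hp : 0 < p) :
    ∫ ω, |X ω| ^ p ∂P ≤ (p / (exp 1 * l)) ^ p * (2 * exp (l ^ 2 * s ^ 2 / 2)) :=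
  calc ∫ ω, |X ω| ^ p ∂P
      ≤ ∫ ω, (p / (exp 1 * l)) ^ p * (exp (l * X ω) + exp (-(l * X ω))) ∂P :=
        integral_mono (hX.integrable_abs_rpow hp) ((hX.integrable_exp_add_exp l).const_mul _)
          fun ω => abs_rpow_le_mul_exp_add_exp hl hp (X ω)
    _ ≤ (p / (exp 1 * l)) ^ p * (2 * exp (l ^ 2 * s ^ 2 / 2)) := by
        rw [integral_const_mul]
        gcongr
        exact hX.integral_exp_add_exp_le l

theorem integral_abs_rpow_le (hX : IsSubgaussian X s P) (hs : 0 < s) {p : ℝ} (hp : 0 < p) :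
    ∫ ω, |X ω| ^ p ∂P ≤ 2 * (p * s ^ 2 / exp 1) ^ (p / 2) := by
  have hl : 0 < √p / s := div_pos (sqrt_pos.2 hp) hs
  refine (hX.integral_abs_rpow_le_of_pos hl hp).trans_eq ?_
  have hexp : (√p / s) ^ 2 * s ^ 2 / 2 = p / 2 := by
    rw [div_pow, sq_sqrt hp.le]
    field_simp
  rw [hexp]
  have hbase : p / (exp 1 * (√p / s)) = √p * s / exp 1 := by
    field_simp
    rw [sq_sqrt hp.le]
  have hsquare : (√p * s / exp 1) ^ 2 * exp 1 = p * s ^ 2 / exp 1 := by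
    field_simp
    rw [sq_sqrt hp.le]
  have hbase_nonneg : 0 ≤ √p * s / exp 1 := by positivity
  calc (p / (exp 1 * (√p / s))) ^ p * (2 * exp (p / 2))
      = 2 * (((√p * s / exp 1) ^ (2 : ℝ)) ^ (p / 2) * exp 1 ^ (p / 2)) := by
        rw [hbase, ← rpow_mul hbase_nonneg, exp_one_rpow]
        ring_nf
    _ = 2 * (p * s ^ 2 / exp 1) ^ (p / 2) := by
        rw [← mul_rpow (by positivity) (exp_pos 1).le, rpow_two, hsquare]

end IsSubgaussian

theorem integral_prod_le_of_forall_integral_le {α β : Type*} [MeasurableSpace α]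
    [MeasurableSpace β] {μ : Measure α} {ν : Measure β} [IsProbabilityMeasure μ] [SFinite ν]
    {f : α × β → ℝ} {K : ℝ} (hf : AEStronglyMeasurable f (μ.prod ν)) (hf0 : 0 ≤ f)
    (hint : ∀ a, Integrable (fun b => f (a, b)) ν) (hK : ∀ a, ∫ b, f (a, b) ∂ν ≤ K) :
    Integrable f (μ.prod ν) ∧ ∫ z, f z ∂(μ.prod ν) ≤ K := by
  have hfint : Integrable f (μ.prod ν) := by
    refine (integrable_prod_iff hf).2 ⟨ae_of_all _ hint, (integrable_const K).mono' ?_ ?_⟩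
    · exact hf.norm.integral_prod_right'
    · refine ae_of_all _ fun a => ?_
      simp only [norm_of_nonneg (hf0 _)]
      rw [norm_of_nonneg (integral_nonneg fun b => hf0 (a, b))]
      exact hK a
  refine ⟨hfint, ?_⟩
  calc ∫ z, f z ∂(μ.prod ν) = ∫ a, ∫ b, f (a, b) ∂ν ∂μ := integral_prod f hfint
    _ ≤ ∫ _, K ∂μ := integral_mono hfint.integral_prod_left (integrable_const K) hK
    _ = K := by simp

theorem memLp_ofReal_of_integrable_abs_rpow {α : Type*} [MeasurableSpace α] {μ : Measure α}
    {f : α → ℝ} {p : ℝ} (hf : AEStronglyMeasurable f μ) (hp : 0 < p)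
    (hfp : Integrable (fun x => |f x| ^ p) μ) : MemLp f (ENNReal.ofReal p) μ := by
  rw [← integrable_norm_rpow_iff hf (by simpa using hp) ENNReal.ofReal_ne_top,
    ENNReal.toReal_ofReal hp.le]
  simpa only [norm_eq_abs] using hfp

theorem abs_integral_le_integral_rnDeriv_rpow_mul_integral_abs_rpow {α : Type*}
    [MeasurableSpace α] {μ ν : Measure α} [SigmaFinite μ] [μ.HaveLebesgueDecomposition ν]
    (hμν : μ ≪ ν) {p q : ℝ} (hpq : p.HolderConjugate q) {f : α → ℝ}
    (hf : AEStronglyMeasurable f ν)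
    (hρ : Integrable (fun x => (μ.rnDeriv ν x).toReal ^ p) ν)
    (hfq : Integrable (fun x => |f x| ^ q) ν) :
    |∫ x, f x ∂μ| ≤
      (∫ x, (μ.rnDeriv ν x).toReal ^ p ∂ν) ^ (1 / p) * (∫ x, |f x| ^ q ∂ν) ^ (1 / q) := by
  have hρLp : MemLp (fun x => (μ.rnDeriv ν x).toReal) (ENNReal.ofReal p) ν := by
    refine memLp_ofReal_of_integrable_abs_rpow
      (Measure.measurable_rnDeriv μ ν).ennreal_toReal.aestronglyMeasurable hpq.pos ?_
    simpa only [abs_of_nonneg ENNReal.toReal_nonneg] using hρ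
  have hfLp : MemLp (fun x => |f x|) (ENNReal.ofReal q) ν :=
    memLp_ofReal_of_integrable_abs_rpow hf.norm hpq.symm.pos (by simpa only [abs_abs] using hfq)
  calc |∫ x, f x ∂μ| = |∫ x, (μ.rnDeriv ν x).toReal * f x ∂ν| := by
        rw [integral_toReal_rnDeriv_mul hμν]
    _ ≤ ∫ x, (μ.rnDeriv ν x).toReal * |f x| ∂ν := by
        refine (abs_integral_le_integral_abs).trans_eq (integral_congr_ae (ae_of_all _ fun x => ?_))
        simp only [abs_mul, abs_of_nonneg ENNReal.toReal_nonneg]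
    _ ≤ _ := integral_mul_le_Lp_mul_Lq_of_nonneg hpq (ae_of_all _ fun _ => ENNReal.toReal_nonneg)
        (ae_of_all _ fun _ => abs_nonneg _) hρLp hfLp

theorem two_mul_subgaussian_moment_le_rpow {σ n q : ℝ} {m : ℕ} (hσ : 0 ≤ σ) (hn : 0 ≤ n)
    (hmq : 2 ≤ m * q) :
    2 * (m * q * (σ / √n) ^ 2 / exp 1) ^ (m * q / 2) ≤
      (σ ^ m * (m * q / n) ^ ((m : ℝ) / 2) * exp (m / exp 1)) ^ q := by
  have hsq : (σ ^ 2) ^ ((m : ℝ) * q / 2) = σ ^ ((m : ℝ) * q) := by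
    rw [← rpow_natCast, ← rpow_mul hσ]
    ring_nf
  have hlhs : 2 * (m * q * (σ / √n) ^ 2 / exp 1) ^ (m * q / 2) =
      σ ^ ((m : ℝ) * q) * (m * q / n) ^ ((m : ℝ) * q / 2) * (2 / exp (m * q / 2)) := by
    rw [div_pow, sq_sqrt hn, show (m : ℝ) * q * (σ ^ 2 / n) = σ ^ 2 * (m * q / n) by ring,
      div_rpow (by positivity) (exp_pos 1).le, mul_rpow (by positivity) (by positivity), hsq,
      exp_one_rpow]
    ring
  have hrhs : (σ ^ m * (m * q / n) ^ ((m : ℝ) / 2) * exp (m / exp 1)) ^ q =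
      σ ^ ((m : ℝ) * q) * (m * q / n) ^ ((m : ℝ) * q / 2) * exp (m * q / exp 1) := by
    rw [mul_rpow (by positivity) (exp_pos _).le, mul_rpow (by positivity) (by positivity),
      ← rpow_natCast, ← rpow_mul hσ, ← rpow_mul (by positivity), ← exp_mul]
    ring_nf
  have hexp : 2 / exp (m * q / 2) ≤ exp (m * q / exp 1) := by
    rw [div_le_iff₀ (exp_pos _), ← exp_add]
    calc (2 : ℝ) ≤ exp 1 := by linarith [add_one_le_exp 1]
      _ ≤ exp (m * q / exp 1 + m * q / 2) := by
        gcongr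
        linarith [show 0 ≤ m * q / exp 1 by positivity]
  rw [hlhs, hrhs]
  gcongr

theorem moment_bound_power_information_general
    {W S : Type*} [MeasurableSpace W] [MeasurableSpace S]
    (joint : Measure (W × S)) [IsProbabilityMeasure joint]
    (gen : W → S → ℝ) (hgen : Measurable (Function.uncurry gen))
    (σ : ℝ) (hσ : 0 < σ) (n : ℕ) (hn : 0 < n)
    (hsubg : ∀ w : W, IsSubgaussian (fun s => gen w s) (σ / Real.sqrt n) joint.snd)
    (hac : joint ≪ joint.fst.prod joint.snd)
    (t q : ℝ) (ht : 1 < t) (htq : 1 / t + 1 / q = 1)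
    (m : ℕ) (hmq2 : 2 < (m : ℝ) * q)
    (hrt : Integrable
      (fun p => ((joint.rnDeriv (joint.fst.prod joint.snd) p).toReal) ^ t)
      (joint.fst.prod joint.snd)) :
    |∫ p, (gen p.1 p.2) ^ m ∂joint| ≤
      σ ^ m * ((m : ℝ) * q / n) ^ ((m : ℝ) / 2) * Real.exp (m / Real.exp 1) *
        ((∫ p, (((joint.rnDeriv (joint.fst.prod joint.snd) p).toReal) ^ t - 1)
            ∂(joint.fst.prod joint.snd)) + 1) ^ (1 / t) := by
  set pr := joint.fst.prod joint.snd
  set B := σ ^ m * ((m : ℝ) * q / n) ^ ((m : ℝ) / 2) * exp (m / exp 1)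
  have hpq : t.HolderConjugate q := holderConjugate_iff.2 ⟨ht, by simpa only [one_div] using htq⟩
  have hp : 0 < (m : ℝ) * q := by linarith
  have hs : 0 < σ / √n := by positivity
  have habs_pow (x : ℝ) : |x ^ m| ^ q = |x| ^ ((m : ℝ) * q) := by
    rw [abs_pow, ← rpow_natCast, ← rpow_mul (abs_nonneg x)]
  obtain ⟨hint, hbound⟩ := integral_prod_le_of_forall_integral_le
    (μ := joint.fst) (ν := joint.snd) (f := fun z => |gen z.1 z.2| ^ ((m : ℝ) * q))
    (hgen.abs.pow_const _).aestronglyMeasurable (fun z => by positivity)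
    (fun w => (hsubg w).integrable_abs_rpow hp) (fun w => (hsubg w).integral_abs_rpow_le hs hp)
  have hmoment : (∫ z, |gen z.1 z.2 ^ m| ^ q ∂pr) ^ (1 / q) ≤ B := by
    simp only [habs_pow, one_div]
    rw [rpow_inv_le_iff_of_pos (integral_nonneg fun z => by positivity) (by positivity) hpq.symm.pos]
    exact hbound.trans (two_mul_subgaussian_moment_le_rpow hσ.le (Nat.cast_nonneg n) hmq2.le)
  have hinfo : ∫ z, ((joint.rnDeriv pr z).toReal ^ t - 1) ∂pr + 1 =
      ∫ z, (joint.rnDeriv pr z).toReal ^ t ∂pr := by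
    rw [integral_sub hrt (integrable_const 1)]
    simp
  calc |∫ z, gen z.1 z.2 ^ m ∂joint|
      ≤ (∫ z, (joint.rnDeriv pr z).toReal ^ t ∂pr) ^ (1 / t) *
          (∫ z, |gen z.1 z.2 ^ m| ^ q ∂pr) ^ (1 / q) :=
        abs_integral_le_integral_rnDeriv_rpow_mul_integral_abs_rpow hac hpq
          (hgen.pow_const m).aestronglyMeasurable hrt (by simpa only [habs_pow] using hint)
    _ ≤ (∫ z, (joint.rnDeriv pr z).toReal ^ t ∂pr) ^ (1 / t) * B := by gcongr
    _ = B * (∫ z, ((joint.rnDeriv pr z).toReal ^ t - 1) ∂pr + 1) ^ (1 / t) := by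
        rw [hinfo, mul_comm]

/-- Power-information bound on the `m`-th moment of the generalization error:
`|E_{P_{W,S}}[gen^m]| ≤ σ^m (mq/n)^{m/2} e^{m/e} (I_P^{(t)}(W;S)+1)^{1/t}`. -/
theorem moment_bound_power_information
    {W S : Type*} [MeasurableSpace W] [MeasurableSpace S]
    (joint : Measure (W × S)) [IsProbabilityMeasure joint]
    (gen : W → S → ℝ) (hgen : Measurable (Function.uncurry gen))
    (σ : ℝ) (hσ : 0 < σ) (n : ℕ) (hn : 0 < n)
    (hsubg : ∀ w : W, IsSubgaussian (fun s => gen w s) (σ / Real.sqrt n) joint.snd)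
    (hmean : ∀ w : W, ∫ s, gen w s ∂joint.snd = 0)
    (hac : joint ≪ joint.fst.prod joint.snd)
    (t q : ℝ) (ht : 1 < t) (hq : 1 < q) (htq : 1 / t + 1 / q = 1)
    (m : ℕ) (hm : 0 < m) (hmq2 : 2 < (m : ℝ) * q) (hmqint : ∃ k : ℕ, (k : ℝ) = (m : ℝ) * q)
    (hrt : Integrable
      (fun p => ((joint.rnDeriv (joint.fst.prod joint.snd) p).toReal) ^ t)
      (joint.fst.prod joint.snd)) :
    |∫ p, (gen p.1 p.2) ^ m ∂joint| ≤
      σ ^ m * ((m : ℝ) * q / n) ^ ((m : ℝ) / 2) * Real.exp (m / Real.exp 1) *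
        ((∫ p, (((joint.rnDeriv (joint.fst.prod joint.snd) p).toReal) ^ t - 1)
            ∂(joint.fst.prod joint.snd)) + 1) ^ (1 / t) :=
  moment_bound_power_information_general joint gen hgen σ hσ n hn hsubg hac t q ht htq m hmq2 hrt
end

section
/- Under the assumptions of the power-information moment bound, specializing $t = q = 2$: the $m$-th moment of the generalization error satisfies $|\mathbb{E}_{P_{W,S}}[\text{gen}(W,S)^m]| \le \sigma^m (2m/n)^{m/2} e^{m/e} \sqrt{I_{\chi^2}(W;S) + 1}$, where $I_{\chi^2}(W;S) = \chi^2(P_{W,S} \| P_W \otimes P_S)$. -/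
/-!
Write `r = dP_{W,S}/d(P_W ⊗ P_S)`. Changing measure and applying Cauchy–Schwarz,
`E_{P_{W,S}} |gen|^m ≤ ‖r‖_{L²} ‖gen^m‖_{L²}`, both norms taken under `P_W ⊗ P_S`, where
`‖r‖²_{L²} = I_{χ²}(W;S) + 1`. For each `w`, `gen(w, ·)` is `σ/√n`-subgaussian under `P_S`, and
the elementary bound `x^{2m} ≤ (2m/(eλ))^{2m} (e^{λx} + e^{-λx})` with `λ² = 2mn/σ²` gives
`E_{P_S} gen(w, ·)^{2m} ≤ 2 (2mσ²/(ne))^m`; integrating over `P_W` bounds `‖gen^m‖²_{L²}`.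
Taking square roots, the leftover factor `√2 e^{-m/2}` is at most `1 ≤ e^{m/e}`.
-/

open MeasureTheory Real

theorem pow_le_div_exp_one_pow_mul_exp (k : ℕ) {t : ℝ} (ht : 0 ≤ t) :
    t ^ k ≤ (k / exp 1) ^ k * exp t := by
  rcases k.eq_zero_or_pos with rfl | hk
  · simpa using one_le_exp ht
  have hk' : (0 : ℝ) < k := by exact_mod_cast hk
  have h : t ≤ k / exp 1 * exp (t / k) := by
    have := add_one_le_exp (t / k - 1)
    rw [sub_add_cancel, exp_sub] at this
    calc t = k * (t / k) := by field_simp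
      _ ≤ k * (exp (t / k) / exp 1) := by gcongr
      _ = k / exp 1 * exp (t / k) := by ring
  calc t ^ k ≤ (k / exp 1 * exp (t / k)) ^ k := by gcongr
    _ = (k / exp 1) ^ k * exp t := by
      rw [mul_pow, ← exp_nat_mul, mul_div_cancel₀ _ hk'.ne']

theorem pow_two_mul_le_mul_exp_add_exp_neg (q : ℕ) {l : ℝ} (hl : 0 < l) (x : ℝ) :
    x ^ (2 * q) ≤ (2 * q / (exp 1 * l)) ^ (2 * q) * (exp (l * x) + exp (-(l * x))) := by
  have hx : x ^ (2 * q) = |l * x| ^ (2 * q) / l ^ (2 * q) := by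
    rw [abs_mul, abs_of_pos hl, mul_pow, pow_abs, abs_of_nonneg (Even.pow_nonneg ⟨q, two_mul q⟩ x)]
    field_simp
  calc x ^ (2 * q) ≤ (2 * q / exp 1) ^ (2 * q) * exp |l * x| / l ^ (2 * q) := by
        rw [hx]
        gcongr
        exact_mod_cast pow_le_div_exp_one_pow_mul_exp (2 * q) (abs_nonneg (l * x))
    _ ≤ (2 * q / exp 1) ^ (2 * q) * (exp (l * x) + exp (-(l * x))) / l ^ (2 * q) := by
        gcongr
        exact exp_abs_le _
    _ = (2 * q / (exp 1 * l)) ^ (2 * q) * (exp (l * x) + exp (-(l * x))) := by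
        rw [div_mul_eq_div_div, div_pow (_ / _)]
        ring

namespace IsSubgaussian

variable {Ω : Type*} [MeasurableSpace Ω] {X : Ω → ℝ} {σ : ℝ} {Q : Measure Ω}

theorem integrable_exp_add_exp_neg (hX : IsSubgaussian X σ Q) (l : ℝ) :
    Integrable (fun ω => exp (l * X ω) + exp (-(l * X ω))) Q :=
  (hX l).1.add (by simpa only [neg_mul] using (hX (-l)).1)

theorem integral_exp_add_exp_neg_le (hX : IsSubgaussian X σ Q) (l : ℝ) :
    ∫ ω, (exp (l * X ω) + exp (-(l * X ω))) ∂Q ≤ 2 * exp (l ^ 2 * σ ^ 2 / 2) := by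
  have hneg := (hX (-l)).2
  simp only [neg_mul, neg_sq] at hneg
  rw [integral_add (hX l).1 (by simpa only [neg_mul] using (hX (-l)).1)]
  linarith [(hX l).2]

theorem lintegral_pow_two_mul_le (hX : IsSubgaussian X σ Q) (hσ : 0 < σ) {q : ℕ}
    (hq : 0 < q) :
    ∫⁻ ω, ENNReal.ofReal (X ω ^ (2 * q)) ∂Q ≤
      ENNReal.ofReal (2 * (2 * q * σ ^ 2 / exp 1) ^ q) := by
  have h2q : (0 : ℝ) < 2 * q := by positivity
  set l := √(2 * q) / σ
  have hl : 0 < l := by positivity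
  have hl2 : l ^ 2 = 2 * q / σ ^ 2 := by rw [div_pow, sq_sqrt h2q.le]
  have hmgf : l ^ 2 * σ ^ 2 / 2 = q := by rw [hl2]; field_simp
  have hC : (2 * q / (exp 1 * l)) ^ (2 * q) * (2 * exp q) =
      2 * (2 * q * σ ^ 2 / exp 1) ^ q := by
    have hsq : (2 * q / (exp 1 * l)) ^ 2 * exp 1 = 2 * q * σ ^ 2 / exp 1 := by
      rw [div_pow, mul_pow (exp 1), hl2]
      field_simp
    rw [pow_mul, ← exp_one_pow, ← hsq]
    ring
  calc ∫⁻ ω, ENNReal.ofReal (X ω ^ (2 * q)) ∂Q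
      ≤ ∫⁻ ω, ENNReal.ofReal ((2 * q / (exp 1 * l)) ^ (2 * q) *
          (exp (l * X ω) + exp (-(l * X ω)))) ∂Q :=
        lintegral_mono fun ω =>
          ENNReal.ofReal_le_ofReal (pow_two_mul_le_mul_exp_add_exp_neg q hl (X ω))
    _ = ENNReal.ofReal (∫ ω, (2 * q / (exp 1 * l)) ^ (2 * q) *
          (exp (l * X ω) + exp (-(l * X ω))) ∂Q) :=
        (ofReal_integral_eq_lintegral_ofReal ((hX.integrable_exp_add_exp_neg l).const_mul _)
          (ae_of_all _ fun ω => by positivity)).symm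
    _ ≤ ENNReal.ofReal (2 * (2 * q * σ ^ 2 / exp 1) ^ q) := by
        rw [integral_const_mul, ← hC, ← hmgf]
        gcongr
        exact hX.integral_exp_add_exp_neg_le l

end IsSubgaussian

section ChiSquare

variable {α : Type*} [MeasurableSpace α] {P μ : Measure α}

/-- `χ²(P ‖ μ)` when `P ≪ μ` with square-integrable density; otherwise a junk value, since the
Bochner integral of a non-integrable function is `0`. -/
noncomputable def chiSqDiv (P μ : Measure α) : ℝ :=
  ∫ x, ((P.rnDeriv μ x).toReal - 1) ^ 2 ∂μ

theorem chiSqDiv_add_one [IsProbabilityMeasure P] [IsProbabilityMeasure μ] (hac : P ≪ μ)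
    (hr2 : Integrable (fun x => (P.rnDeriv μ x).toReal ^ 2) μ) :
    chiSqDiv P μ + 1 = ∫ x, (P.rnDeriv μ x).toReal ^ 2 ∂μ := by
  have hr : Integrable (fun x => 2 * (P.rnDeriv μ x).toReal) μ :=
    Measure.integrable_toReal_rnDeriv.const_mul 2
  have hexpand : ∀ x, ((P.rnDeriv μ x).toReal - 1) ^ 2 =
      ((P.rnDeriv μ x).toReal ^ 2 - 2 * (P.rnDeriv μ x).toReal) + 1 := fun x => by ring
  simp_rw [chiSqDiv, hexpand]
  rw [integral_add (by exact hr2.sub hr) (integrable_const 1), integral_sub hr2 hr, integral_const_mul,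
    Measure.integral_toReal_rnDeriv hac]
  simp only [probReal_univ, integral_const, smul_eq_mul, mul_one]
  ring

theorem lintegral_rnDeriv_rpow_two [IsProbabilityMeasure P] [IsProbabilityMeasure μ]
    (hac : P ≪ μ) (hr2 : Integrable (fun x => (P.rnDeriv μ x).toReal ^ 2) μ) :
    ∫⁻ x, P.rnDeriv μ x ^ (2 : ℝ) ∂μ = ENNReal.ofReal (chiSqDiv P μ + 1) := by
  rw [chiSqDiv_add_one hac hr2, ofReal_integral_eq_lintegral_ofReal hr2
    (ae_of_all _ fun x => sq_nonneg _)]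
  refine lintegral_congr_ae ?_
  filter_upwards [Measure.rnDeriv_lt_top P μ] with x hx
  rw [ENNReal.rpow_two, ENNReal.ofReal_pow ENNReal.toReal_nonneg, ENNReal.ofReal_toReal hx.ne]

/-- Change of measure to `μ`, then Cauchy–Schwarz in `L²(μ)`. -/
theorem abs_integral_le_sqrt_chiSqDiv_add_one_mul [IsProbabilityMeasure P]
    [IsProbabilityMeasure μ] (hac : P ≪ μ)
    (hr2 : Integrable (fun x => (P.rnDeriv μ x).toReal ^ 2) μ) {g : α → ℝ}
    (hg : AEMeasurable g μ) {B : ℝ} (hB : ∫⁻ x, ENNReal.ofReal (g x ^ 2) ∂μ ≤ ENNReal.ofReal B) :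
    |∫ x, g x ∂P| ≤ √(chiSqDiv P μ + 1) * √B := by
  have hg2 : ∀ x, ‖g x‖ₑ ^ (2 : ℝ) = ENNReal.ofReal (g x ^ 2) := fun x => by
    rw [ENNReal.rpow_two, enorm_eq_ofReal_abs, ← ENNReal.ofReal_pow (abs_nonneg _), sq_abs]
  have hsqrt : ∀ c : ℝ, ENNReal.ofReal c ^ (1 / 2 : ℝ) = ENNReal.ofReal √c := fun c => by
    rcases le_total 0 c with hc | hc
    · rw [ENNReal.ofReal_rpow_of_nonneg hc (by norm_num), sqrt_eq_rpow]
    · rw [ENNReal.ofReal_of_nonpos hc, sqrt_eq_zero'.2 hc, ENNReal.ofReal_zero,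
        ENNReal.zero_rpow_of_pos (by norm_num)]
  have key : ‖∫ x, g x ∂P‖ₑ ≤ ENNReal.ofReal (√(chiSqDiv P μ + 1) * √B) :=
    calc ‖∫ x, g x ∂P‖ₑ ≤ ∫⁻ x, ‖g x‖ₑ ∂P := enorm_integral_le_lintegral_enorm _
      _ = ∫⁻ x, P.rnDeriv μ x * ‖g x‖ₑ ∂μ := (lintegral_rnDeriv_mul hac hg.enorm).symm
      _ ≤ (∫⁻ x, P.rnDeriv μ x ^ (2 : ℝ) ∂μ) ^ (1 / 2 : ℝ) *
            (∫⁻ x, ‖g x‖ₑ ^ (2 : ℝ) ∂μ) ^ (1 / 2 : ℝ) :=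
        ENNReal.lintegral_mul_le_Lp_mul_Lq μ .two_two
          (Measure.measurable_rnDeriv P μ).aemeasurable hg.enorm
      _ ≤ ENNReal.ofReal (chiSqDiv P μ + 1) ^ (1 / 2 : ℝ) * ENNReal.ofReal B ^ (1 / 2 : ℝ) := by
        rw [lintegral_rnDeriv_rpow_two hac hr2]
        simp_rw [hg2]
        gcongr
      _ = ENNReal.ofReal (√(chiSqDiv P μ + 1) * √B) := by
        rw [hsqrt, hsqrt, ENNReal.ofReal_mul (sqrt_nonneg _)]
  rw [← ofReal_norm] at key
  rw [← Real.norm_eq_abs]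
  exact (ENNReal.ofReal_le_ofReal_iff (by positivity)).1 key

end ChiSquare

theorem sqrt_two_mul_div_exp_one_pow_le {a : ℝ} (ha : 0 ≤ a) {m : ℕ} (hm : 0 < m) :
    √(2 * (a / exp 1) ^ m) ≤ a ^ ((m : ℝ) / 2) * exp (m / exp 1) := by
  have h2 : 2 ≤ exp m :=
    calc (2 : ℝ) ≤ exp 1 := by linarith [add_one_le_exp 1]
      _ ≤ exp m := exp_le_exp.2 (by exact_mod_cast hm)
  rw [sqrt_le_left (by positivity), mul_pow, ← rpow_natCast (a ^ _), ← rpow_mul ha,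
    Nat.cast_ofNat, div_mul_cancel₀ _ two_ne_zero, rpow_natCast, div_pow, exp_one_pow]
  calc 2 * (a ^ m / exp m) ≤ exp m * (a ^ m / exp m) := by gcongr
    _ = a ^ m := by field_simp
    _ ≤ a ^ m * exp (m / exp 1) ^ 2 := le_mul_of_one_le_right (by positivity)
        (one_le_pow₀ (one_le_exp (by positivity)))

theorem moment_bound_chi_square_information_general
    {W S : Type*} [MeasurableSpace W] [MeasurableSpace S]
    (joint : Measure (W × S)) [IsProbabilityMeasure joint]
    (gen : W → S → ℝ) (hgen : Measurable (Function.uncurry gen))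
    (σ : ℝ) (hσ : 0 < σ) (n : ℕ) (hn : 0 < n)
    (hsubg : ∀ w : W, IsSubgaussian (fun s => gen w s) (σ / Real.sqrt n) joint.snd)
    (hac : joint ≪ joint.fst.prod joint.snd)
    (m : ℕ) (hm : 0 < m)
    (hr2 : Integrable
      (fun p => ((joint.rnDeriv (joint.fst.prod joint.snd) p).toReal) ^ 2)
      (joint.fst.prod joint.snd)) :
    |∫ p, (gen p.1 p.2) ^ m ∂joint| ≤
      σ ^ m * (2 * (m : ℝ) / n) ^ ((m : ℝ) / 2) * Real.exp (m / Real.exp 1) *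
        Real.sqrt
          ((∫ p, ((joint.rnDeriv (joint.fst.prod joint.snd) p).toReal - 1) ^ 2
              ∂(joint.fst.prod joint.snd)) + 1) := by
  have hn' : (0 : ℝ) < n := by exact_mod_cast hn
  have ha : 2 * m * (σ / √n) ^ 2 = σ ^ 2 * (2 * m / n) := by
    rw [div_pow, sq_sqrt hn'.le]
    ring
  set a : ℝ := 2 * m * (σ / √n) ^ 2
  have hmoment : ∫⁻ p, ENNReal.ofReal ((gen p.1 p.2 ^ m) ^ 2) ∂(joint.fst.prod joint.snd) ≤
      ENNReal.ofReal (2 * (a / exp 1) ^ m) := by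
    simp_rw [← pow_mul, mul_comm m 2]
    rw [lintegral_prod _ (by exact (hgen.pow_const _).ennreal_ofReal.aemeasurable)]
    calc _ ≤ ∫⁻ _, ENNReal.ofReal (2 * (a / exp 1) ^ m) ∂joint.fst :=
          lintegral_mono fun w => (hsubg w).lintegral_pow_two_mul_le (by positivity) hm
      _ = _ := by simp
  have hconst : a ^ ((m : ℝ) / 2) = σ ^ m * (2 * m / n) ^ ((m : ℝ) / 2) := by
    rw [ha, mul_rpow (sq_nonneg σ) (by positivity), rpow_div_two_eq_sqrt _ (sq_nonneg σ),
      sqrt_sq hσ.le, rpow_natCast]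
  calc |∫ p, gen p.1 p.2 ^ m ∂joint|
      ≤ √(chiSqDiv joint (joint.fst.prod joint.snd) + 1) * √(2 * (a / exp 1) ^ m) :=
        abs_integral_le_sqrt_chiSqDiv_add_one_mul hac hr2 (hgen.pow_const m).aemeasurable hmoment
    _ ≤ √(chiSqDiv joint (joint.fst.prod joint.snd) + 1) *
          (a ^ ((m : ℝ) / 2) * exp (m / exp 1)) := by
        gcongr
        exact sqrt_two_mul_div_exp_one_pow_le (by positivity) hm
    _ = _ := by rw [hconst, mul_comm]; rfl

/-- Chi-square information bound on the `m`-th moment of the generalization error: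
`|E_{P_{W,S}}[gen^m]| ≤ σ^m (2m/n)^{m/2} e^{m/e} √(I_{χ²}(W;S)+1)`. -/
theorem moment_bound_chi_square_information
    {W S : Type*} [MeasurableSpace W] [MeasurableSpace S]
    (joint : Measure (W × S)) [IsProbabilityMeasure joint]
    (gen : W → S → ℝ) (hgen : Measurable (Function.uncurry gen))
    (σ : ℝ) (hσ : 0 < σ) (n : ℕ) (hn : 0 < n)
    (hsubg : ∀ w : W, IsSubgaussian (fun s => gen w s) (σ / Real.sqrt n) joint.snd)
    (hmean : ∀ w : W, ∫ s, gen w s ∂joint.snd = 0)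
    (hac : joint ≪ joint.fst.prod joint.snd)
    (m : ℕ) (hm : 0 < m) (hm2 : 2 < 2 * m)
    (hr2 : Integrable
      (fun p => ((joint.rnDeriv (joint.fst.prod joint.snd) p).toReal) ^ 2)
      (joint.fst.prod joint.snd)) :
    |∫ p, (gen p.1 p.2) ^ m ∂joint| ≤
      σ ^ m * (2 * (m : ℝ) / n) ^ ((m : ℝ) / 2) * Real.exp (m / Real.exp 1) *
        Real.sqrt
          ((∫ p, ((joint.rnDeriv (joint.fst.prod joint.snd) p).toReal - 1) ^ 2
              ∂(joint.fst.prod joint.snd)) + 1) :=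
  moment_bound_chi_square_information_general joint gen hgen σ hσ n hn hsubg hac m hm hr2
end

section
/- For probability measures $P \ll Q$ and $t > 2$, the chi-square divergence is controlled by the power divergence of order $t$: $\sqrt{\chi^2(P\|Q) + 1} \le (D_P^{(t)}(P\|Q) + 1)^{1/(2(t-1))}$. -/
open MeasureTheory
open scoped ENNReal

/-! With `g = dP/dQ` we have `∫ g dQ = 1`, so `χ²(P‖Q) + 1 = ∫ g² dQ`. Writing
`g² = g^((t-2)/(t-1)) · (g^t)^(1/(t-1))` and applying Hölder's inequality with these two weights
(which sum to `1`) gives the moment interpolation `∫ g² ≤ (∫ g)^((t-2)/(t-1)) (∫ g^t)^(1/(t-1))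
= (∫ g^t)^(1/(t-1))`; taking square roots gives the claim. -/

section

variable {α : Type*} [MeasurableSpace α] {μ : Measure α}

theorem ENNReal.lintegral_rpow_le_interpolate {g : α → ℝ≥0∞}
    (hg : AEMeasurable g μ) {s t : ℝ} (hs : 1 ≤ s) (hst : s ≤ t) (ht : 1 < t) :
    ∫⁻ x, g x ^ s ∂μ ≤
      (∫⁻ x, g x ∂μ) ^ ((t - s) / (t - 1)) * (∫⁻ x, g x ^ t ∂μ) ^ ((s - 1) / (t - 1)) := by
  have ht1 : t - 1 ≠ 0 := by linarith
  have ha : 0 ≤ (t - s) / (t - 1) := div_nonneg (by linarith) (by linarith)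
  have hb : 0 ≤ (s - 1) / (t - 1) := div_nonneg (by linarith) (by linarith)
  have hsplit : ∀ x, g x ^ s = g x ^ ((t - s) / (t - 1)) * (g x ^ t) ^ ((s - 1) / (t - 1)) := by
    intro x
    rw [← ENNReal.rpow_mul, ← ENNReal.rpow_add_of_nonneg _ _ ha (mul_nonneg (by linarith) hb)]
    congr 1
    field_simp
    ring
  simp_rw [hsplit]
  exact ENNReal.lintegral_mul_norm_pow_le hg (hg.pow_const t) ha hb (by field_simp; ring)

theorem ENNReal.lintegral_sq_le_of_lintegral_eq_one {g : α → ℝ≥0∞} (hg : AEMeasurable g μ)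
    (hg1 : ∫⁻ x, g x ∂μ = 1) {t : ℝ} (ht : 2 ≤ t) :
    ∫⁻ x, g x ^ (2 : ℝ) ∂μ ≤ (∫⁻ x, g x ^ t ∂μ) ^ (1 / (t - 1)) := by
  have h := ENNReal.lintegral_rpow_le_interpolate hg one_le_two ht (by linarith)
  norm_num only [hg1, ENNReal.one_rpow, one_mul] at h
  simpa only [one_div] using h

theorem integral_toReal_rpow {g : α → ℝ≥0∞} (hg : AEMeasurable g μ)
    (hg_fin : ∀ᵐ x ∂μ, g x ≠ ∞) {r : ℝ} (hr : 0 ≤ r) :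
    ∫ x, (g x).toReal ^ r ∂μ = (∫⁻ x, g x ^ r ∂μ).toReal := by
  simp only [ENNReal.toReal_rpow]
  exact integral_toReal (hg.pow_const r)
    (hg_fin.mono fun x hx => ENNReal.rpow_lt_top_of_nonneg hr hx)

theorem integrable_toReal_rpow_iff {g : α → ℝ≥0∞} (hg : AEMeasurable g μ)
    (hg_fin : ∀ᵐ x ∂μ, g x ≠ ∞) {r : ℝ} (hr : 0 ≤ r) :
    Integrable (fun x => (g x).toReal ^ r) μ ↔ ∫⁻ x, g x ^ r ∂μ ≠ ∞ := by
  simp only [ENNReal.toReal_rpow]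
  exact integrable_toReal_iff (hg.pow_const r)
    (hg_fin.mono fun x hx => ENNReal.rpow_ne_top_of_nonneg hr hx)

theorem integral_sub_one_sq_add_one [IsProbabilityMeasure μ] {f : α → ℝ}
    (hf : AEStronglyMeasurable f μ) (hf2 : Integrable (fun x => f x ^ 2) μ)
    (hf1 : ∫ x, f x ∂μ = 1) :
    ∫ x, (f x - 1) ^ 2 ∂μ + 1 = ∫ x, f x ^ 2 ∂μ := by
  have hvar := ProbabilityTheory.variance_eq_sub ((memLp_two_iff_integrable_sq hf).2 hf2)
  rw [ProbabilityTheory.variance_eq_integral hf.aemeasurable, hf1] at hvar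
  simp only [Pi.pow_apply, one_pow] at hvar
  linarith

end

/-- For `t > 2`, the chi-square divergence is controlled by the power divergence of
order `t`: `√(χ²(P‖Q)+1) ≤ (D_P^{(t)}(P‖Q)+1)^{1/(2(t-1))}`. -/
theorem sqrt_chiSq_le_power_divergence
    {X : Type*} [MeasurableSpace X] (P Q : Measure X)
    [IsProbabilityMeasure P] [IsProbabilityMeasure Q] (hPQ : P ≪ Q)
    (t : ℝ) (ht : 2 < t)
    (hrt : Integrable (fun x => ((P.rnDeriv Q x).toReal) ^ t) Q) :
    Real.sqrt ((∫ x, ((P.rnDeriv Q x).toReal - 1) ^ 2 ∂Q) + 1) ≤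
      ((∫ x, (((P.rnDeriv Q x).toReal) ^ t - 1) ∂Q) + 1) ^ (1 / (2 * (t - 1))) := by
  set g := P.rnDeriv Q
  have hg : AEMeasurable g Q := (Measure.measurable_rnDeriv P Q).aemeasurable
  have hg_fin : ∀ᵐ x ∂Q, g x ≠ ∞ := Measure.rnDeriv_ne_top P Q
  have hg1 : ∫⁻ x, g x ∂Q = 1 := by rw [Measure.lintegral_rnDeriv hPQ, measure_univ]
  have hexp : 0 ≤ 1 / (t - 1) := div_nonneg zero_le_one (by linarith)
  have hgt_fin := (integrable_toReal_rpow_iff hg hg_fin (by linarith)).1 hrt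
  have hmom := ENNReal.lintegral_sq_le_of_lintegral_eq_one hg hg1 ht.le
  have hg2 : Integrable (fun x => (g x).toReal ^ (2 : ℝ)) Q :=
    (integrable_toReal_rpow_iff hg hg_fin zero_le_two).2
      (hmom.trans_lt (ENNReal.rpow_lt_top_of_nonneg hexp hgt_fin)).ne
  have hmom_real :
      ∫ x, (g x).toReal ^ (2 : ℝ) ∂Q ≤ (∫ x, (g x).toReal ^ t ∂Q) ^ (1 / (t - 1)) := by
    rw [integral_toReal_rpow hg hg_fin zero_le_two, integral_toReal_rpow hg hg_fin (by linarith),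
      ENNReal.toReal_rpow]
    exact ENNReal.toReal_mono (ENNReal.rpow_ne_top_of_nonneg hexp hgt_fin) hmom
  simp only [Real.rpow_two] at hg2 hmom_real
  have hg_int : ∫ x, (g x).toReal ∂Q = 1 := by
    rw [Measure.integral_toReal_rnDeriv hPQ, probReal_univ]
  have hgt_nonneg : 0 ≤ ∫ x, (g x).toReal ^ t ∂Q := by positivity
  rw [integral_sub_one_sq_add_one hg.ennreal_toReal.aestronglyMeasurable hg2 hg_int,
    integral_sub hrt (integrable_const 1), integral_const, probReal_univ, one_smul, sub_add_cancel,
    Real.sqrt_le_left (by positivity), ← Real.rpow_natCast, ← Real.rpow_mul hgt_nonneg]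
  convert hmom_real using 2
  field_simp
  norm_num
end

section
/- Suppose for each fixed $w$, gen$(w,S) = L_P(w,\mu) - L_E(w,S)$ is $\sigma/\sqrt{n}$-subgaussian with mean zero under $P_S$, so that gen$(w,S)^2$ has mean at most $\sigma^2/n$ and is $(256\sigma^4/n^2, 16\sigma^2/n)$-subexponential under $P_S$. Then the second moment of the generalization error under the joint law satisfies $\mathbb{E}_{P_{W,S}}[\text{gen}(W,S)^2] \le \frac{\sigma^2}{n}(16\, I(W;S) + 9)$. -/
/-!
Writing `exp (c x²)` as a Gaussian average of `exp (√(2c) x z)` turns the subgaussian bound on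
the moment generating function of `gen w` into
`E_{P_S}[exp (n gen(w,S)² / (16 σ²))] ≤ (7/8)^(-1/2) ≤ 3/2` for every `w`, hence under
`P_W ⊗ P_S`. The Donsker–Varadhan inequality `E_P[G] ≤ KL(P ‖ Q) + log E_Q[exp G]` with
`G = n gen² / (16 σ²)`, `P = P_{W,S}` and `Q = P_W ⊗ P_S` then gives
`n / (16 σ²) · E[gen²] ≤ I(W;S) + log (3/2) ≤ I(W;S) + 9/16`.
-/

open MeasureTheory Real
open scoped ENNReal

lemma lintegral_exp_neg_mul_sq {b : ℝ} (hb : 0 < b) :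
    ∫⁻ z : ℝ, ENNReal.ofReal (exp (-b * z ^ 2)) = ENNReal.ofReal (√(π / b)) := by
  rw [← ofReal_integral_eq_lintegral_ofReal (integrable_exp_neg_mul_sq hb)
    (ae_of_all _ fun _ => (exp_pos _).le), integral_gaussian]

lemma lintegral_exp_mul_sub_sq_div_two (b : ℝ) :
    ∫⁻ z : ℝ, ENNReal.ofReal (exp (b * z - z ^ 2 / 2)) =
      ENNReal.ofReal (exp (b ^ 2 / 2)) * ENNReal.ofReal (√(2 * π)) := by
  have hsq (z : ℝ) : b * z - z ^ 2 / 2 = b ^ 2 / 2 + -(1 / 2) * (z - b) ^ 2 := by ring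
  simp_rw [hsq, exp_add, ENNReal.ofReal_mul (exp_pos _).le]
  rw [lintegral_const_mul' _ _ ENNReal.ofReal_ne_top,
    lintegral_sub_right_eq_self (fun z => ENNReal.ofReal (exp (-(1 / 2) * z ^ 2))) b,
    lintegral_exp_neg_mul_sq one_half_pos]
  norm_num [div_div_eq_mul_div, mul_comm]

theorem IsSubgaussian.lintegral_exp_mul_sq_le {Ω : Type*} [MeasurableSpace Ω] {P : Measure Ω}
    [SFinite P] {X : Ω → ℝ} {s c : ℝ} (h : IsSubgaussian X s P) (hX : Measurable X)
    (hc : 0 ≤ c) (hcs : 2 * c * s ^ 2 < 1) :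
    ∫⁻ ω, ENNReal.ofReal (exp (c * X ω ^ 2)) ∂P ≤
      ENNReal.ofReal (1 / √(1 - 2 * c * s ^ 2)) := by
  set a := √(2 * c)
  have ha : a ^ 2 = 2 * c := sq_sqrt (by positivity)
  have h2π : 0 < √(2 * π) := by positivity
  -- `exp (c x²)` is the moment generating function of a standard Gaussian at `a x`
  have hmgf (x : ℝ) : ∫⁻ z : ℝ, ENNReal.ofReal (exp (a * x * z - z ^ 2 / 2)) =
      ENNReal.ofReal (exp (c * x ^ 2)) * ENNReal.ofReal (√(2 * π)) := by
    rw [lintegral_exp_mul_sub_sq_div_two, mul_pow, ha]; ring_nf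
  rw [← ENNReal.mul_le_mul_iff_left (ENNReal.ofReal_pos.mpr h2π).ne' ENNReal.ofReal_ne_top,
    ← lintegral_mul_const' _ _ ENNReal.ofReal_ne_top]
  calc ∫⁻ ω, ENNReal.ofReal (exp (c * X ω ^ 2)) * ENNReal.ofReal (√(2 * π)) ∂P
      = ∫⁻ z : ℝ, (∫⁻ ω, ENNReal.ofReal (exp ((a * z) * X ω)) ∂P) *
          ENNReal.ofReal (exp (-(z ^ 2) / 2)) := by
        simp_rw [← hmgf]
        rw [lintegral_lintegral_swap (by fun_prop)]
        refine lintegral_congr fun z => ?_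
        rw [← lintegral_mul_const' _ _ ENNReal.ofReal_ne_top]
        refine lintegral_congr fun ω => ?_
        rw [← ENNReal.ofReal_mul (exp_pos _).le, ← exp_add]
        ring_nf
    _ ≤ ∫⁻ z : ℝ, ENNReal.ofReal (exp ((a * z) ^ 2 * s ^ 2 / 2)) *
          ENNReal.ofReal (exp (-(z ^ 2) / 2)) := by
        gcongr with z
        rw [← ofReal_integral_eq_lintegral_ofReal (h (a * z)).1
          (ae_of_all _ fun _ => (exp_pos _).le)]
        exact ENNReal.ofReal_le_ofReal (h (a * z)).2
    _ = ∫⁻ z : ℝ, ENNReal.ofReal (exp (-((1 - 2 * c * s ^ 2) / 2) * z ^ 2)) := by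
        refine lintegral_congr fun z => ?_
        rw [← ENNReal.ofReal_mul (exp_pos _).le, ← exp_add, mul_pow, ha]
        ring_nf
    _ = ENNReal.ofReal (1 / √(1 - 2 * c * s ^ 2)) * ENNReal.ofReal (√(2 * π)) := by
        rw [lintegral_exp_neg_mul_sq (by linarith), ← ENNReal.ofReal_mul (by positivity)]
        congr 1
        rw [div_div_eq_mul_div, sqrt_div' _ (by linarith), mul_comm π, one_div_mul_eq_div]

section DonskerVaradhan

variable {α : Type*} [MeasurableSpace α] {μ ν : Measure α} {G : α → ℝ}

lemma le_llr_add_exp_div_rnDeriv_sub_one [SigmaFinite μ] [μ.HaveLebesgueDecomposition ν]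
    (hμν : μ ≪ ν) :
    ∀ᵐ x ∂μ, G x ≤ llr μ ν x + exp (G x) / (μ.rnDeriv ν x).toReal - 1 := by
  filter_upwards [Measure.rnDeriv_pos hμν, hμν.ae_le (Measure.rnDeriv_lt_top μ ν)]
    with x hpos hfin
  have hf : 0 < (μ.rnDeriv ν x).toReal := ENNReal.toReal_pos hpos.ne' hfin.ne
  have := log_le_sub_one_of_pos (div_pos (exp_pos (G x)) hf)
  rw [log_div (exp_pos _).ne' hf.ne', log_exp] at this
  rw [llr_def]
  linarith

lemma integrable_exp_div_rnDeriv [SigmaFinite μ] [μ.HaveLebesgueDecomposition ν] (hμν : μ ≪ ν)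
    (hexp : Integrable (fun x => exp (G x)) ν) :
    Integrable (fun x => exp (G x) / (μ.rnDeriv ν x).toReal) μ := by
  refine (integrable_toReal_rnDeriv_mul_iff hμν).mp
    (hexp.mono ?_ (ae_of_all _ fun x => ?_))
  · exact (Measure.measurable_rnDeriv μ ν).ennreal_toReal.aestronglyMeasurable.mul
      (hexp.aestronglyMeasurable.mul
        (Measure.measurable_rnDeriv μ ν).ennreal_toReal.inv.aestronglyMeasurable)
  · rcases eq_or_ne (μ.rnDeriv ν x).toReal 0 with h | h
    · simp [h, (exp_pos _).le]
    · rw [mul_div_cancel₀ _ h]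

lemma integrable_of_nonneg_of_integrable_exp [SigmaFinite μ] [μ.HaveLebesgueDecomposition ν]
    (hμν : μ ≪ ν) (hllr : Integrable (llr μ ν) μ) (hGm : AEStronglyMeasurable G μ)
    (hG : 0 ≤ᵐ[μ] G) (hexp : Integrable (fun x => exp (G x)) ν) : Integrable G μ := by
  refine (hllr.add (integrable_exp_div_rnDeriv hμν hexp)).mono' hGm ?_
  filter_upwards [le_llr_add_exp_div_rnDeriv_sub_one (G := G) hμν, hG] with x hle h0
  rw [norm_of_nonneg h0]
  dsimp only [Pi.add_apply]
  linarith

/-- Donsker–Varadhan: the gap in this inequality is `KL(μ ‖ ν.tilted G) ≥ 0`. -/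
lemma integral_le_integral_llr_add_log_integral_exp [IsProbabilityMeasure μ] [SigmaFinite ν]
    (hμν : μ ≪ ν) (hllr : Integrable (llr μ ν) μ) (hG : Integrable G μ)
    (hexp : Integrable (fun x => exp (G x)) ν) :
    ∫ x, G x ∂μ ≤ ∫ x, llr μ ν x ∂μ + log (∫ x, exp (G x) ∂ν) := by
  have : NeZero ν := ⟨fun h => IsProbabilityMeasure.ne_zero μ
    (Measure.absolutelyContinuous_zero_iff.mp (h ▸ hμν))⟩
  have : IsProbabilityMeasure (ν.tilted G) := isProbabilityMeasure_tilted hexp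
  have hKL := InformationTheory.integral_llr_add_sub_measure_univ_nonneg
    (hμν.trans (absolutelyContinuous_tilted hexp))
    (integrable_llr_tilted_right hμν hG hllr hexp)
  rw [integral_llr_tilted_right hμν hG hexp hllr] at hKL
  simp only [probReal_univ] at hKL
  linarith

end DonskerVaradhan

lemma lintegral_prod_le_of_forall_lintegral_le {α β : Type*} [MeasurableSpace α]
    [MeasurableSpace β] {μ : Measure α} [IsProbabilityMeasure μ] {ν : Measure β} [SFinite ν]
    {F : α × β → ℝ≥0∞} (hF : Measurable F) {C : ℝ≥0∞} (h : ∀ a, ∫⁻ b, F (a, b) ∂ν ≤ C) :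
    ∫⁻ p, F p ∂(μ.prod ν) ≤ C := by
  rw [lintegral_prod _ hF.aemeasurable]
  exact (lintegral_mono h).trans_eq (by simp)

theorem second_moment_bound_mutual_information_general
    {W S : Type*} [MeasurableSpace W] [MeasurableSpace S]
    (joint : Measure (W × S)) [IsProbabilityMeasure joint]
    (gen : W → S → ℝ) (hgen : Measurable (Function.uncurry gen))
    (σ : ℝ) (hσ : 0 < σ) (n : ℕ) (hn : 0 < n)
    (hsubg : ∀ w : W, IsSubgaussian (fun s => gen w s) (σ / Real.sqrt n) joint.snd)
    (hac : joint ≪ joint.fst.prod joint.snd)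
    (hlog : Integrable
      (fun p => Real.log ((joint.rnDeriv (joint.fst.prod joint.snd) p).toReal)) joint) :
    ∫ p, (gen p.1 p.2) ^ 2 ∂joint ≤
      σ ^ 2 / n *
        (16 * (∫ p, Real.log ((joint.rnDeriv (joint.fst.prod joint.snd) p).toReal) ∂joint)
          + 9) := by
  set ν := joint.fst.prod joint.snd
  set c : ℝ := n / (16 * σ ^ 2)
  have hc : 0 < c := by positivity
  set G : W × S → ℝ := fun p => c * gen p.1 p.2 ^ 2
  have hGm : Measurable G := by fun_prop
  have hcs : 2 * c * (σ / √n) ^ 2 = 1 / 8 := by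
    simp only [c, div_pow, sq_sqrt n.cast_nonneg]; field_simp; ring
  have hlint : ∫⁻ p, ENNReal.ofReal (exp (G p)) ∂ν ≤ ENNReal.ofReal (1 / √(1 - 1 / 8)) :=
    lintegral_prod_le_of_forall_lintegral_le (by fun_prop) fun w => hcs ▸
      (hsubg w).lintegral_exp_mul_sq_le (hgen.comp measurable_prodMk_left) hc.le (by linarith)
  have hexp : Integrable (fun p => exp (G p)) ν :=
    ⟨hGm.exp.aestronglyMeasurable, (hasFiniteIntegral_iff_ofReal (ae_of_all _ fun _ =>
      (exp_pos _).le)).mpr (hlint.trans_lt ENNReal.ofReal_lt_top)⟩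
  have hZ : ∫ p, exp (G p) ∂ν ≤ 3 / 2 := by
    rw [integral_eq_lintegral_of_nonneg_ae (ae_of_all _ fun _ => (exp_pos _).le)
      hexp.aestronglyMeasurable]
    refine ENNReal.toReal_le_of_le_ofReal (by norm_num)
      (hlint.trans (ENNReal.ofReal_le_ofReal ?_))
    rw [one_div_le (sqrt_pos.mpr (by norm_num)) (by norm_num), le_sqrt' (by norm_num)]
    norm_num
  have hDV := integral_le_integral_llr_add_log_integral_exp hac hlog
    (integrable_of_nonneg_of_integrable_exp hac hlog hGm.aestronglyMeasurable
      (ae_of_all _ fun p => by positivity) hexp) hexp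
  have hlogZ : log (∫ p, exp (G p) ∂ν) ≤ 1 / 2 := by
    linarith [log_le_log (integral_exp_pos hexp) hZ,
      log_le_sub_one_of_pos (by norm_num : (0 : ℝ) < 3 / 2)]
  simp only [G, integral_const_mul, llr_def] at hDV
  rw [show σ ^ 2 / n * (16 * ∫ p, log (joint.rnDeriv ν p).toReal ∂joint + 9) =
    (∫ p, log (joint.rnDeriv ν p).toReal ∂joint + 9 / 16) / c by simp only [c]; field_simp,
    le_div_iff₀' hc]
  linarith

/-- Mutual-information bound on the second moment of the generalization error:
`E_{P_{W,S}}[gen²] ≤ (σ²/n)(16 I(W;S) + 9)`. -/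
theorem second_moment_bound_mutual_information
    {W S : Type*} [MeasurableSpace W] [MeasurableSpace S]
    (joint : Measure (W × S)) [IsProbabilityMeasure joint]
    (gen : W → S → ℝ) (hgen : Measurable (Function.uncurry gen))
    (σ : ℝ) (hσ : 0 < σ) (n : ℕ) (hn : 0 < n)
    (hsubg : ∀ w : W, IsSubgaussian (fun s => gen w s) (σ / Real.sqrt n) joint.snd)
    (hmean : ∀ w : W, ∫ s, gen w s ∂joint.snd = 0)
    (hsqmean : ∀ w : W, ∫ s, (gen w s) ^ 2 ∂joint.snd ≤ σ ^ 2 / n)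
    (hsubexp : ∀ w : W, ∀ l : ℝ, |l| ≤ n / (16 * σ ^ 2) →
      ∫ s, Real.exp (l * ((gen w s) ^ 2 - ∫ s', (gen w s') ^ 2 ∂joint.snd)) ∂joint.snd ≤
        Real.exp (128 * l ^ 2 * σ ^ 4 / (n : ℝ) ^ 2))
    (hac : joint ≪ joint.fst.prod joint.snd)
    (hlog : Integrable
      (fun p => Real.log ((joint.rnDeriv (joint.fst.prod joint.snd) p).toReal)) joint) :
    ∫ p, (gen p.1 p.2) ^ 2 ∂joint ≤
      σ ^ 2 / n *
        (16 * (∫ p, Real.log ((joint.rnDeriv (joint.fst.prod joint.snd) p).toReal) ∂joint)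
          + 9) :=
  second_moment_bound_mutual_information_general joint gen hgen σ hσ n hn hsubg hac hlog
end

section
/- Single-draw high-probability bound: under the subgaussian loss assumption, for $\delta \in (0,1)$ and $t > 1$, setting $\beta = \frac{1}{t-1}\log\big(\frac{I_P^{(t)}(W;S)+1}{\delta^t}\big)$, if $\beta > 2$ and $\beta \in \mathbb{Z}^+$ then with probability at least $1-\delta$ under $P_{W,S}$: $|\text{gen}(W,S)| \le e^{1/e+1/2}\sqrt{\frac{2t\sigma^2}{n(t-1)}}\sqrt{\log\big((I_P^{(t)}(W;S)+1)^{1/t}\big) + \log(1/\delta)}$. -/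
/-!
For a fixed hypothesis `w`, the Chernoff bound for the `σ/√n`-subgaussian loss gives
`P_S(|gen(w, ·)| ≥ c) ≤ 2 exp(-c² n / (2σ²))`, so the event `A = {|gen| > c}` has the same
bound under the product `P_W ⊗ P_S`. Hölder's inequality with exponents `t` and `t/(t-1)`,
applied to `P_{W,S}(A) = ∫_A dP_{W,S}/d(P_W ⊗ P_S)`, transfers this to the joint law:
`P_{W,S}(A) ≤ (I_P^{(t)} + 1)^{1/t} (P_W ⊗ P_S)(A)^{(t-1)/t}`. For the stated threshold `c`
the exponent `c² n / (2σ²)` equals `e^{2/e+1} β ≥ β + log 2`, and with the definition of `β`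
this makes the right-hand side at most `δ`.
-/

open MeasureTheory Real

open ProbabilityTheory
open scoped ENNReal

lemma IsSubgaussian.hasSubgaussianMGF {Ω : Type*} [MeasurableSpace Ω] {X : Ω → ℝ} {σ : ℝ}
    {P : Measure Ω} (h : IsSubgaussian X σ P) :
    HasSubgaussianMGF X ⟨σ ^ 2, sq_nonneg σ⟩ P where
  integrable_exp_mul l := (h l).1
  mgf_le l := (h l).2.trans_eq <| congrArg rexp (by change _ = σ ^ 2 * l ^ 2 / 2; ring)

lemma ProbabilityTheory.HasSubgaussianMGF.measureReal_abs_ge_le {Ω : Type*} [MeasurableSpace Ω]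
    {X : Ω → ℝ} {c : NNReal} {μ : Measure Ω} [IsFiniteMeasure μ] (h : HasSubgaussianMGF X c μ)
    {ε : ℝ} (hε : 0 ≤ ε) : μ.real {ω | ε ≤ |X ω|} ≤ 2 * exp (-ε ^ 2 / (2 * c)) := by
  have h_union : {ω | ε ≤ |X ω|} = {ω | ε ≤ X ω} ∪ {ω | ε ≤ (-X) ω} := by
    ext ω
    simp only [Set.mem_ofPred_eq, Set.mem_union, Pi.neg_apply, le_abs]
  calc μ.real {ω | ε ≤ |X ω|}
      ≤ μ.real {ω | ε ≤ X ω} + μ.real {ω | ε ≤ (-X) ω} := h_union ▸ measureReal_union_le _ _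
    _ ≤ exp (-ε ^ 2 / (2 * c)) + exp (-ε ^ 2 / (2 * c)) :=
        add_le_add (h.measure_ge_le hε) (h.neg.measure_ge_le hε)
    _ = 2 * exp (-ε ^ 2 / (2 * c)) := by ring

lemma IsSubgaussian.measure_abs_ge_le {Ω : Type*} [MeasurableSpace Ω] {X : Ω → ℝ} {σ : ℝ}
    {P : Measure Ω} [IsFiniteMeasure P] (h : IsSubgaussian X σ P) {ε : ℝ} (hε : 0 ≤ ε) :
    P {ω | ε ≤ |X ω|} ≤ ENNReal.ofReal (2 * exp (-ε ^ 2 / (2 * σ ^ 2))) := by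
  rw [← ofReal_measureReal]
  exact ENNReal.ofReal_le_ofReal (h.hasSubgaussianMGF.measureReal_abs_ge_le hε)

lemma MeasureTheory.Measure.prod_apply_le_of_forall_prodMk_preimage_le {α β : Type*}
    [MeasurableSpace α] [MeasurableSpace β] {μ : Measure α} {ν : Measure β}
    [IsProbabilityMeasure μ] [SFinite ν] {A : Set (α × β)} (hA : MeasurableSet A) {b : ℝ≥0∞}
    (h : ∀ x, ν (Prod.mk x ⁻¹' A) ≤ b) :
    μ.prod ν A ≤ b := by
  rw [Measure.prod_apply hA]
  calc ∫⁻ x, ν (Prod.mk x ⁻¹' A) ∂μ ≤ ∫⁻ _, b ∂μ := lintegral_mono h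
    _ = b := by simp

lemma lintegral_rpow_eq_ofReal_integral {α : Type*} [MeasurableSpace α] {μ : Measure α}
    {f : α → ℝ≥0∞} (hf : ∀ᵐ x ∂μ, f x < ∞) {p : ℝ} (hp : 0 ≤ p)
    (hint : Integrable (fun x => (f x).toReal ^ p) μ) :
    ∫⁻ x, f x ^ p ∂μ = ENNReal.ofReal (∫ x, (f x).toReal ^ p ∂μ) := by
  rw [ofReal_integral_eq_lintegral_ofReal hint (.of_forall fun x => by positivity)]
  refine lintegral_congr_ae (hf.mono fun x hx => ?_)
  dsimp only
  rw [← ENNReal.ofReal_rpow_of_nonneg ENNReal.toReal_nonneg hp, ENNReal.ofReal_toReal hx.ne]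

section ChangeOfMeasure

variable {α : Type*} [MeasurableSpace α] {ν μ : Measure α}

lemma measure_le_lintegral_rnDeriv_rpow_mul [ν.HaveLebesgueDecomposition μ] [SFinite μ]
    (hac : ν ≪ μ) {p q : ℝ} (hpq : p.HolderConjugate q) (A : Set α) :
    ν A ≤ (∫⁻ x, ν.rnDeriv μ x ^ p ∂μ) ^ (1 / p) * μ A ^ (1 / q) := by
  calc ν A = ∫⁻ x in A, (ν.rnDeriv μ * 1) x ∂μ := by
        simp [Measure.setLIntegral_rnDeriv hac]
    _ ≤ (∫⁻ x in A, ν.rnDeriv μ x ^ p ∂μ) ^ (1 / p) * (∫⁻ x in A, 1 ^ q ∂μ) ^ (1 / q) :=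
        ENNReal.lintegral_mul_le_Lp_mul_Lq _ hpq (Measure.measurable_rnDeriv ν μ).aemeasurable
          aemeasurable_const
    _ ≤ (∫⁻ x, ν.rnDeriv μ x ^ p ∂μ) ^ (1 / p) * μ A ^ (1 / q) := by
        simp only [ENNReal.one_rpow, lintegral_const, Measure.restrict_apply_univ, one_mul]
        gcongr
        · exact (one_div_pos.2 hpq.pos).le
        · exact Measure.restrict_le_self

lemma measure_le_ofReal_integral_rnDeriv_rpow_mul [SigmaFinite ν] [SigmaFinite μ]
    (hac : ν ≪ μ) {t : ℝ} (ht : 1 < t)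
    (hint : Integrable (fun x => (ν.rnDeriv μ x).toReal ^ t) μ) {A : Set α} {b : ℝ}
    (hb : 0 ≤ b) (hA : μ A ≤ ENNReal.ofReal b) :
    ν A ≤ ENNReal.ofReal ((∫ x, (ν.rnDeriv μ x).toReal ^ t ∂μ) ^ (1 / t) * b ^ ((t - 1) / t)) := by
  have ht0 : 0 < t := by linarith
  calc ν A ≤ (∫⁻ x, ν.rnDeriv μ x ^ t ∂μ) ^ (1 / t) * μ A ^ ((t - 1) / t) :=
        one_div_div t (t - 1) ▸
          measure_le_lintegral_rnDeriv_rpow_mul hac (Real.HolderConjugate.conjExponent ht) A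
    _ ≤ ENNReal.ofReal (∫ x, (ν.rnDeriv μ x).toReal ^ t ∂μ) ^ (1 / t)
          * ENNReal.ofReal b ^ ((t - 1) / t) := by
        rw [← lintegral_rpow_eq_ofReal_integral (Measure.rnDeriv_lt_top ν μ) ht0.le hint]
        gcongr
    _ = _ := by
        rw [ENNReal.ofReal_rpow_of_nonneg (integral_nonneg fun x => by positivity) (by positivity),
          ENNReal.ofReal_rpow_of_nonneg hb (by bound), ← ENNReal.ofReal_mul (by positivity)]

end ChangeOfMeasure

section Arithmetic

variable {t a δ β : ℝ}

lemma sub_one_mul_eq_log_sub_of_eq_log_div (ht : 1 < t) (ha : 0 < a) (hδ : 0 < δ)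
    (hβ : β = 1 / (t - 1) * log (a / δ ^ t)) :
    (t - 1) * β = log a - t * log δ := by
  have ht1 : t - 1 ≠ 0 := by linarith
  rw [hβ, log_div ha.ne' (by positivity), log_rpow hδ]
  field_simp

lemma log_rpow_one_div_add_log_one_div (ht : 1 < t) (ha : 0 < a) (hδ : 0 < δ)
    (hβ : β = 1 / (t - 1) * log (a / δ ^ t)) :
    log (a ^ (1 / t)) + log (1 / δ) = (t - 1) / t * β := by
  have hβ' := sub_one_mul_eq_log_sub_of_eq_log_div ht ha hδ hβ
  have ht0 : t ≠ 0 := by linarith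
  rw [log_rpow ha, one_div δ, log_inv]
  field_simp
  linarith

lemma rpow_one_div_mul_two_mul_exp_neg_rpow_le {K : ℝ} (ht : 1 < t) (ha : 0 < a)
    (hδ : 0 < δ) (hβ : β = 1 / (t - 1) * log (a / δ ^ t)) (hK : β + log 2 ≤ K) :
    a ^ (1 / t) * (2 * exp (-K)) ^ ((t - 1) / t) ≤ δ := by
  have hβ' := sub_one_mul_eq_log_sub_of_eq_log_div ht ha hδ hβ
  rw [← log_le_log_iff (by positivity) hδ, log_mul (by positivity) (by positivity),
    log_rpow ha, log_rpow (by positivity), log_mul two_ne_zero (exp_pos _).ne', log_exp,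
    div_mul_eq_mul_div, div_mul_eq_mul_div, ← add_div, div_le_iff₀ (by linarith)]
  nlinarith

lemma sq_threshold_div_eq {σ : ℝ} {n : ℕ} (hσ : 0 < σ) (hn : 0 < n) (ht : 1 < t)
    (hβ : 0 ≤ β) :
    (exp (1 / exp 1 + 1 / 2) * √(2 * t * σ ^ 2 / (n * (t - 1))) * √((t - 1) / t * β)) ^ 2
      / (2 * (σ / √n) ^ 2) = exp (2 / exp 1 + 1) * β := by
  have hn0 : (0 : ℝ) < n := by exact_mod_cast hn
  have ht1 : 0 < t - 1 := by linarith
  simp only [mul_pow, div_pow, sq_sqrt (Nat.cast_nonneg n),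
    sq_sqrt (by positivity : 0 ≤ 2 * t * σ ^ 2 / (n * (t - 1))),
    sq_sqrt (by positivity : 0 ≤ (t - 1) / t * β), ← exp_nat_mul]
  field_simp
  ring_nf

lemma add_log_two_le_exp_mul (hβ : 1 ≤ β) : β + log 2 ≤ exp (2 / exp 1 + 1) * β := by
  have h2 : 2 ≤ exp (2 / exp 1 + 1) := by
    linarith [add_one_le_exp (2 / exp 1 + 1), (by positivity : 0 ≤ 2 / exp 1)]
  nlinarith [log_two_lt_d9]

end Arithmetic

theorem single_draw_high_probability_bound_general
    {W S : Type*} [MeasurableSpace W] [MeasurableSpace S]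
    (joint : Measure (W × S)) [IsProbabilityMeasure joint]
    (gen : W → S → ℝ) (hgen : Measurable (Function.uncurry gen))
    (σ : ℝ) (hσ : 0 < σ) (n : ℕ) (hn : 0 < n)
    (hsubg : ∀ w : W, IsSubgaussian (fun s => gen w s) (σ / Real.sqrt n) joint.snd)
    (hac : joint ≪ joint.fst.prod joint.snd)
    (t : ℝ) (ht : 1 < t)
    (hrt : Integrable
      (fun p => ((joint.rnDeriv (joint.fst.prod joint.snd) p).toReal) ^ t)
      (joint.fst.prod joint.snd))
    (δ : ℝ) (hδ : δ ∈ Set.Ioo (0 : ℝ) 1)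
    (Ipt : ℝ)
    (hIpt : Ipt = (∫ p, (((joint.rnDeriv (joint.fst.prod joint.snd) p).toReal) ^ t - 1)
        ∂(joint.fst.prod joint.snd)))
    (β : ℝ) (hβ : β = (1 / (t - 1)) * Real.log ((Ipt + 1) / δ ^ t))
    (hβ2 : 2 < β) :
    joint {p | Real.exp (1 / Real.exp 1 + 1 / 2) *
        Real.sqrt (2 * t * σ ^ 2 / (n * (t - 1))) *
        Real.sqrt (Real.log ((Ipt + 1) ^ (1 / t)) + Real.log (1 / δ)) <
          |gen p.1 p.2|} ≤
      ENNReal.ofReal δ := by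
  obtain ⟨hδ0, -⟩ := hδ
  set μ := joint.fst.prod joint.snd
  have hIpt1 : Ipt + 1 = ∫ p, (joint.rnDeriv μ p).toReal ^ t ∂μ := by
    simp [hIpt, integral_sub hrt (integrable_const 1)]
  -- `Ipt + 1 = 0` would give `β = log 0 / (t - 1) = 0`.
  have ha : 0 < Ipt + 1 := by
    refine (hIpt1 ▸ integral_nonneg fun p => by positivity).lt_of_ne' fun h0 => ?_
    simp [h0] at hβ
    linarith
  rw [log_rpow_one_div_add_log_one_div ht ha hδ0 hβ]
  set c := exp (1 / exp 1 + 1 / 2) * √(2 * t * σ ^ 2 / (n * (t - 1))) * √((t - 1) / t * β)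
  have htail : ∀ w, joint.snd {s | c ≤ |gen w s|}
      ≤ ENNReal.ofReal (2 * exp (-(exp (2 / exp 1 + 1) * β))) := fun w => by
    rw [← sq_threshold_div_eq hσ hn ht (by linarith), ← neg_div]
    exact (hsubg w).measure_abs_ge_le (by positivity)
  have hμA : μ {p | c < |gen p.1 p.2|} ≤ ENNReal.ofReal (2 * exp (-(exp (2 / exp 1 + 1) * β))) :=
    Measure.prod_apply_le_of_forall_prodMk_preimage_le (measurableSet_lt measurable_const hgen.abs)
      fun w => (measure_mono fun s hs => le_of_lt (α := ℝ) hs).trans (htail w)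
  refine (measure_le_ofReal_integral_rnDeriv_rpow_mul hac ht hrt (by positivity) hμA).trans ?_
  exact ENNReal.ofReal_le_ofReal (hIpt1 ▸ rpow_one_div_mul_two_mul_exp_neg_rpow_le ht ha hδ0 hβ
    (add_log_two_le_exp_mul (by linarith)))

/-- Single-draw high-probability generalization bound: with probability at least `1-δ`
under `P_{W,S}`,
`|gen| ≤ e^{1/e+1/2} √(2tσ²/(n(t-1))) √(log((I_P^{(t)}(W;S)+1)^{1/t}) + log(1/δ))`. -/
theorem single_draw_high_probability_bound
    {W S : Type*} [MeasurableSpace W] [MeasurableSpace S]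
    (joint : Measure (W × S)) [IsProbabilityMeasure joint]
    (gen : W → S → ℝ) (hgen : Measurable (Function.uncurry gen))
    (σ : ℝ) (hσ : 0 < σ) (n : ℕ) (hn : 0 < n)
    (hsubg : ∀ w : W, IsSubgaussian (fun s => gen w s) (σ / Real.sqrt n) joint.snd)
    (hmean : ∀ w : W, ∫ s, gen w s ∂joint.snd = 0)
    (hac : joint ≪ joint.fst.prod joint.snd)
    (t : ℝ) (ht : 1 < t)
    (hrt : Integrable
      (fun p => ((joint.rnDeriv (joint.fst.prod joint.snd) p).toReal) ^ t)
      (joint.fst.prod joint.snd))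
    (hint : ∀ k : ℕ, Integrable (fun p => (gen p.1 p.2) ^ k) joint)
    (δ : ℝ) (hδ : δ ∈ Set.Ioo (0 : ℝ) 1)
    (Ipt : ℝ)
    (hIpt : Ipt = (∫ p, (((joint.rnDeriv (joint.fst.prod joint.snd) p).toReal) ^ t - 1)
        ∂(joint.fst.prod joint.snd)))
    (β : ℝ) (hβ : β = (1 / (t - 1)) * Real.log ((Ipt + 1) / δ ^ t))
    (hβ2 : 2 < β) (hβint : ∃ k : ℕ, (k : ℝ) = β) :
    joint {p | Real.exp (1 / Real.exp 1 + 1 / 2) *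
        Real.sqrt (2 * t * σ ^ 2 / (n * (t - 1))) *
        Real.sqrt (Real.log ((Ipt + 1) ^ (1 / t)) + Real.log (1 / δ)) <
          |gen p.1 p.2|} ≤
      ENNReal.ofReal δ :=
  single_draw_high_probability_bound_general joint gen hgen σ hσ n hn hsubg hac t ht hrt δ hδ Ipt
    hIpt β hβ hβ2
end
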